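/- For every t > 0 and every η ∈ ℝ, one has ∫₀^∞ e^{-8 t v²} / √|v - η| dv ≤ C t^{-1/4} for an absolute constant C independent of t and η. -/

import Mathlib

open MeasureTheory

lemma aux_half (δ : ℝ) (hδ : 0 < δ) :
    IntervalIntegrable (fun u : ℝ => |u| ^ (-(1/2) : ℝ)) volume 0 δ ∧
      (∫ u in (0:ℝ)..δ, |u| ^ (-(1/2) : ℝ)) = 2 * δ ^ ((1:ℝ)/2) := by
  have heq : Set.EqOn (fun u : ℝ => u ^ (-(1/2) : ℝ)) (fun u : ℝ => |u| ^ (-(1/2) : ℝ))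
      (Set.uIcc (0:ℝ) δ) := by
    intro u hu
    rw [Set.uIcc_of_le hδ.le] at hu
    simp [abs_of_nonneg hu.1]
  have hii : IntervalIntegrable (fun u : ℝ => u ^ (-(1/2) : ℝ)) volume 0 δ :=
    intervalIntegral.intervalIntegrable_rpow' (by norm_num)
  have hval : (∫ u in (0:ℝ)..δ, u ^ (-(1/2) : ℝ)) = 2 * δ ^ ((1:ℝ)/2) := by
    have h1 : (-(1/2) : ℝ) + 1 = 1/2 := by norm_num
    rw [integral_rpow (Or.inl (by norm_num)), h1, Real.zero_rpow (by norm_num)]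
    ring
  refine ⟨?_, ?_⟩
  · rw [intervalIntegrable_iff] at hii ⊢
    exact hii.congr_fun (fun u hu => heq (Set.uIoc_subset_uIcc hu)) measurableSet_uIoc
  · rw [← intervalIntegral.integral_congr heq, hval]

lemma aux_abs (δ : ℝ) (hδ : 0 < δ) :
    IntervalIntegrable (fun u : ℝ => |u| ^ (-(1/2) : ℝ)) volume (-δ) δ ∧
      (∫ u in (-δ:ℝ)..δ, |u| ^ (-(1/2) : ℝ)) = 4 * δ ^ ((1:ℝ)/2) := by
  obtain ⟨hi, hv⟩ := aux_half δ hδ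
  have hneg : IntervalIntegrable (fun u : ℝ => |u| ^ (-(1/2) : ℝ)) volume (-δ) 0 := by
    have h := ((IntervalIntegrable.iff_comp_neg (f := fun u : ℝ => |u| ^ (-(1/2) : ℝ)) (a := 0) (b := δ) (by simp)).mp hi).symm
    simpa [abs_neg] using h
  have hvneg : (∫ u in (-δ:ℝ)..0, |u| ^ (-(1/2) : ℝ)) = 2 * δ ^ ((1:ℝ)/2) := by
    have h := intervalIntegral.integral_comp_neg (a := (0:ℝ)) (b := δ)
      (fun u : ℝ => |u| ^ (-(1/2) : ℝ))
    simp only [abs_neg, neg_zero] at h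
    rw [← h, hv]
  refine ⟨hneg.trans hi, ?_⟩
  rw [← intervalIntegral.integral_add_adjacent_intervals hneg hi, hvneg, hv]
  ring

/-- `∫₀^∞ e^{-8 t v²} / √|v - η| dv ≤ C t^{-1/4}` uniformly in `η ∈ ℝ`, `t > 0`. -/
theorem stmt8 :
    ∃ C : ℝ, 0 < C ∧ ∀ t η : ℝ, 0 < t →
      (∫ v in Set.Ioi (0 : ℝ), Real.exp (-8 * t * v ^ 2) / Real.sqrt |v - η|) ≤
        C * t ^ (-(1 / 4) : ℝ) := by
  refine ⟨4 + Real.sqrt (Real.pi / 8), by positivity, fun t η ht => ?_⟩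
  set δ : ℝ := t ^ (-(1/2) : ℝ) with hδdef
  have hδ : 0 < δ := Real.rpow_pos_of_pos ht _
  obtain ⟨habsint, habsval⟩ := aux_abs δ hδ
  set F : ℝ → ℝ := (Set.Icc (-δ) δ).indicator (fun u => |u| ^ (-(1/2) : ℝ)) with hF
  have hFint : Integrable F := by
    rw [hF, integrable_indicator_iff measurableSet_Icc]
    exact (intervalIntegrable_iff_integrableOn_Icc_of_le (by linarith)).mp habsint
  have hFcomp : Integrable (fun v => F (v - η)) := hFint.comp_sub_right η
  have hFnn : ∀ u, 0 ≤ F u := fun u =>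
    Set.indicator_nonneg (fun x _ => Real.rpow_nonneg (abs_nonneg x) _) u
  have hgauss : Integrable (fun v : ℝ => Real.exp (-8 * t * v ^ 2)) := by
    have h := integrable_exp_neg_mul_sq (b := 8 * t) (by linarith)
    simpa [neg_mul, mul_assoc] using h
  set g : ℝ → ℝ := fun v => F (v - η) + δ ^ (-(1/2) : ℝ) * Real.exp (-8 * t * v ^ 2) with hg
  have hgint : Integrable g := hFcomp.add (hgauss.const_mul _)
  have hgnn : ∀ v, 0 ≤ g v := by
    intro v
    have := hFnn (v - η)
    have := (Real.exp_pos (-8 * t * v ^ 2)).le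
    have := (Real.rpow_pos_of_pos hδ (-(1/2) : ℝ)).le
    positivity
  have hle : ∀ v, Real.exp (-8 * t * v ^ 2) / Real.sqrt |v - η| ≤ g v := by
    intro v
    have hrw : Real.exp (-8 * t * v ^ 2) / Real.sqrt |v - η|
        = Real.exp (-8 * t * v ^ 2) * |v - η| ^ (-(1/2) : ℝ) := by
      rw [Real.rpow_neg (abs_nonneg _), ← Real.sqrt_eq_rpow, div_eq_mul_inv]
    rw [hrw]
    rcases le_or_gt |v - η| δ with h | h
    · have h1 : Real.exp (-8 * t * v ^ 2) ≤ 1 := by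
        rw [Real.exp_le_one_iff]
        nlinarith [sq_nonneg v]
      have hmem : v - η ∈ Set.Icc (-δ) δ := by
        rcases abs_le.mp h with ⟨ha, hb⟩
        exact ⟨ha, hb⟩
      calc Real.exp (-8 * t * v ^ 2) * |v - η| ^ (-(1/2) : ℝ)
          ≤ 1 * |v - η| ^ (-(1/2) : ℝ) :=
            mul_le_mul_of_nonneg_right h1 (Real.rpow_nonneg (abs_nonneg _) _)
        _ = F (v - η) := by rw [one_mul, hF, Set.indicator_of_mem hmem]
        _ ≤ g v := le_add_of_nonneg_right (by positivity)
    · have h2 : |v - η| ^ (-(1/2) : ℝ) ≤ δ ^ (-(1/2) : ℝ) :=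
        Real.rpow_le_rpow_of_nonpos hδ h.le (by norm_num)
      calc Real.exp (-8 * t * v ^ 2) * |v - η| ^ (-(1/2) : ℝ)
          ≤ Real.exp (-8 * t * v ^ 2) * δ ^ (-(1/2) : ℝ) :=
            mul_le_mul_of_nonneg_left h2 (Real.exp_pos _).le
        _ = δ ^ (-(1/2) : ℝ) * Real.exp (-8 * t * v ^ 2) := mul_comm _ _
        _ ≤ g v := le_add_of_nonneg_left (hFnn _)
  have key : (∫ v in Set.Ioi (0:ℝ), Real.exp (-8 * t * v ^ 2) / Real.sqrt |v - η|)
      ≤ ∫ v, g v := by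
    calc (∫ v in Set.Ioi (0:ℝ), Real.exp (-8 * t * v ^ 2) / Real.sqrt |v - η|)
        ≤ ∫ v in Set.Ioi (0:ℝ), g v := by
          apply integral_mono_of_nonneg
          · filter_upwards with v
            positivity
          · exact hgint.integrableOn
          · filter_upwards with v using hle v
      _ ≤ ∫ v, g v := setIntegral_le_integral hgint (.of_forall hgnn)
  have hIF : (∫ v, F (v - η)) = 4 * δ ^ ((1:ℝ)/2) := by
    rw [integral_sub_right_eq_self F η, hF, integral_indicator measurableSet_Icc,
      MeasureTheory.integral_Icc_eq_integral_Ioc,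
      ← intervalIntegral.integral_of_le (by linarith), habsval]
  have hIG : (∫ v : ℝ, Real.exp (-8 * t * v ^ 2)) = Real.sqrt (Real.pi / (8 * t)) := by
    simp_rw [show ∀ v : ℝ, -8 * t * v ^ 2 = -(8 * t) * v ^ 2 from fun v => by ring]
    exact integral_gaussian (8 * t)
  have hIg : (∫ v, g v)
      = 4 * δ ^ ((1:ℝ)/2) + δ ^ (-(1/2) : ℝ) * Real.sqrt (Real.pi / (8 * t)) := by
    rw [hg]
    rw [integral_add hFcomp (hgauss.const_mul _), hIF, integral_const_mul, hIG]
  have e1 : δ ^ ((1:ℝ)/2) = t ^ (-(1/4) : ℝ) := by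
    rw [hδdef, ← Real.rpow_mul ht.le]
    norm_num
  have e2 : δ ^ (-(1/2) : ℝ) = t ^ ((1:ℝ)/4) := by
    rw [hδdef, ← Real.rpow_mul ht.le]
    norm_num
  have e3 : Real.sqrt (Real.pi / (8 * t)) = Real.sqrt (Real.pi / 8) * t ^ (-(1/2) : ℝ) := by
    have h8 : Real.pi / (8 * t) = (Real.pi / 8) * t⁻¹ := by field_simp
    have ht' : Real.sqrt t⁻¹ = t ^ (-(1/2) : ℝ) := by
      rw [Real.sqrt_inv, Real.sqrt_eq_rpow, ← Real.rpow_neg ht.le]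
    rw [h8, Real.sqrt_mul (by positivity), ht']
  have e4 : t ^ ((1:ℝ)/4) * t ^ (-(1/2) : ℝ) = t ^ (-(1/4) : ℝ) := by
    rw [← Real.rpow_add ht]
    norm_num
  refine key.trans (le_of_eq ?_)
  rw [hIg, e1, e2, e3]
  calc 4 * t ^ (-(1/4):ℝ) + t ^ ((1:ℝ)/4) * (Real.sqrt (Real.pi/8) * t ^ (-(1/2):ℝ))
      = 4 * t ^ (-(1/4):ℝ)
          + Real.sqrt (Real.pi/8) * (t ^ ((1:ℝ)/4) * t ^ (-(1/2):ℝ)) := by ring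
    _ = (4 + Real.sqrt (Real.pi/8)) * t ^ (-(1/4):ℝ) := by rw [e4]; ring
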